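/- If S₁, S₂ are non-disjoint sets and κ₁, κ₂ are antichains with spans S₁, S₂ such that π_{S₁∩S₂}(κ₁) ≠ π_{S₁∩S₂}(κ₂), then κ₁ ∨ κ₂ ≰ κ₁ × κ₂, i.e., the interval [κ₁ ∨ κ₂, κ₁ × κ₂] is empty. -/

import Mathlib

open Finset

/-- Families of finite subsets of ℕ. -/
abbrev Fam := Finset (Finset ℕ)

/-- `α` is an antichain of subsets of `N`: all members are subsets of `N`
and no member is a (proper) subset of another. -/
def IsAC (N : Finset ℕ) (α : Fam) : Prop :=
  (∀ A ∈ α, A ⊆ N) ∧ ∀ A ∈ α, ∀ B ∈ α, A ⊆ B → A = B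

instance (N : Finset ℕ) : DecidablePred (IsAC N) := fun α => by
  unfold IsAC; infer_instance

/-- The partial order on antichains: every member of `α` is contained in some member of `β`. -/
def amle (α β : Fam) : Prop := ∀ A ∈ α, ∃ B ∈ β, A ⊆ B

instance (α β : Fam) : Decidable (amle α β) := by
  unfold amle; infer_instance

/-- `sup` of a family: its maximal elements under inclusion. -/
def maxels (S : Fam) : Fam := S.filter (fun A => ∀ B ∈ S, A ⊆ B → A = B)

/-- The span of an antichain: the union of its members. -/
def sp (α : Fam) : Finset ℕ := α.sup id

/-- Join: maximal elements of the union. -/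
def joinAC (α β : Fam) : Fam := maxels (α ∪ β)

/-- Meet: maximal elements of the pairwise intersections. -/
def meetAC (α β : Fam) : Fam := maxels ((α ×ˢ β).image fun p => p.1 ∩ p.2)

/-- Projection onto `M`: maximal elements of {A ∩ M : A ∈ α}. -/
def proj (M : Finset ℕ) (α : Fam) : Fam := maxels (α.image (· ∩ M))

/-- External product. -/
def xprod (α β : Fam) : Fam :=
  maxels ((α ×ˢ β).image fun p => (p.1 \ sp β) ∪ (p.2 \ sp α) ∪ (p.1 ∩ p.2))

/-- The finite set of all antichains of subsets of `N`. -/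
def AMTf (N : Finset ℕ) : Finset Fam := N.powerset.powerset.filter (IsAC N)

/-- The interval `[a, b]` inside `AMTf N`, as a `Finset`. -/
def intervalF (N : Finset ℕ) (a b : Fam) : Finset Fam :=
  (AMTf N).filter (fun κ => amle a κ ∧ amle κ b)

/-- The interval `[a, b]` of antichains of subsets of `N`, as a `Set`. -/
def intervalSet (N : Finset ℕ) (a b : Fam) : Set Fam :=
  {κ | IsAC N κ ∧ amle a κ ∧ amle κ b}

/-- n-ary join of a family indexed by the members of `σ`. -/
def bigJoin (σ : Fam) (κ : Finset ℕ → Fam) : Fam := maxels (σ.sup κ)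

/-- n-ary external product of a family indexed by the members of `σ`. -/
noncomputable def bigX (σ : Fam) (κ : Finset ℕ → Fam) : Fam :=
  (σ.toList.map κ).foldr xprod {(∅ : Finset ℕ)}

/-- Nonempty antichains of subsets of `S` with span exactly `S`. -/
def Upsf (S : Finset ℕ) : Finset Fam :=
  S.powerset.powerset.filter (fun κ => IsAC S κ ∧ κ ≠ ∅ ∧ sp κ = S)

/-!
If `κ₁ ∨ κ₂ ≤ κ₁ × κ₂`, every member `A` of `κ₁ ∪ κ₂` lies below some
`(A' \ sp κ₂) ∪ (B' \ sp κ₁) ∪ (A' ∩ B')`; on `M = sp κ₁ ∩ sp κ₂` the first two pieces vanish,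
so `A ∩ M ⊆ A' ∩ B' ∩ M`. Hence the traces of `κ₁` and `κ₂` on `M` dominate each other, and
their maximal elements, the projections, coincide.
-/

lemma maxels_subset (S : Fam) : maxels S ⊆ S := filter_subset _ _

lemma exists_mem_maxels_superset (S : Fam) {A : Finset ℕ} (hA : A ∈ S) :
    ∃ M ∈ maxels S, A ⊆ M := by
  obtain ⟨M, hAM, hM⟩ :=
    (S.filter (A ⊆ ·)).exists_le_maximal (mem_filter.2 ⟨hA, Subset.rfl⟩)
  have hMS := (mem_filter.1 hM.prop).1
  refine ⟨M, mem_filter.2 ⟨hMS, fun B hB hMB => ?_⟩, hAM⟩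
  exact Subset.antisymm hMB (hM.2 (mem_filter.2 ⟨hB, hAM.trans hMB⟩) hMB)

lemma amle_of_subset {α β : Fam} (h : α ⊆ β) : amle α β :=
  fun A hA => ⟨A, h hA, Subset.rfl⟩

lemma amle_trans {α β γ : Fam} (hαβ : amle α β) (hβγ : amle β γ) : amle α γ := by
  intro A hA
  obtain ⟨B, hB, hAB⟩ := hαβ A hA
  obtain ⟨C, hC, hBC⟩ := hβγ B hB
  exact ⟨C, hC, hAB.trans hBC⟩

lemma amle_maxels (S : Fam) : amle S (maxels S) :=
  fun _ hA => exists_mem_maxels_superset S hA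

lemma maxels_subset_maxels_of_amle {X Y : Fam} (hXY : amle X Y) (hYX : amle Y X) :
    maxels X ⊆ maxels Y := by
  intro x hx
  obtain ⟨hxX, hxmax⟩ := mem_filter.1 hx
  obtain ⟨y, hyY, hxy⟩ := hXY x hxX
  obtain ⟨x', hx'X, hyx'⟩ := hYX y hyY
  obtain rfl : x = y := Subset.antisymm hxy (hxmax x' hx'X (hxy.trans hyx') ▸ hyx')
  refine mem_filter.2 ⟨hyY, fun y' hy' hxy' => ?_⟩
  obtain ⟨x'', hx'', hy'x''⟩ := hYX y' hy'
  exact Subset.antisymm hxy' (hxmax x'' hx'' (hxy'.trans hy'x'') ▸ hy'x'')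

lemma maxels_eq_of_amle {X Y : Fam} (hXY : amle X Y) (hYX : amle Y X) :
    maxels X = maxels Y :=
  Subset.antisymm (maxels_subset_maxels_of_amle hXY hYX) (maxels_subset_maxels_of_amle hYX hXY)

lemma amle_image_inter_of_forall {α β : Fam} (M : Finset ℕ)
    (h : ∀ A ∈ α, ∃ B ∈ β, A ∩ M ⊆ B) :
    amle (α.image (· ∩ M)) (β.image (· ∩ M)) := by
  simp only [amle, mem_image, forall_exists_index, and_imp, forall_apply_eq_imp_iff₂,
    exists_exists_and_eq_and]
  intro A hA
  obtain ⟨B, hB, hAB⟩ := h A hA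
  exact ⟨B, hB, subset_inter hAB inter_subset_right⟩

lemma proj_eq_of_forall_subset_inter (M : Finset ℕ) {κ₁ κ₂ : Fam}
    (h : ∀ A ∈ κ₁ ∪ κ₂, ∃ A' ∈ κ₁, ∃ B' ∈ κ₂, A ∩ M ⊆ A' ∩ B') :
    proj M κ₁ = proj M κ₂ := by
  refine maxels_eq_of_amle (amle_image_inter_of_forall M fun A hA => ?_)
    (amle_image_inter_of_forall M fun B hB => ?_)
  · obtain ⟨_, _, B', hB', hsub⟩ := h A (mem_union_left _ hA)
    exact ⟨B', hB', hsub.trans inter_subset_right⟩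
  · obtain ⟨A', hA', _, _, hsub⟩ := h B (mem_union_right _ hB)
    exact ⟨A', hA', hsub.trans inter_subset_left⟩

lemma xprod_term_inter_span_subset (α β : Fam) (A B : Finset ℕ) :
    ((A \ sp β) ∪ (B \ sp α) ∪ (A ∩ B)) ∩ (sp α ∩ sp β) ⊆ A ∩ B := by
  intro x
  simp only [mem_inter, mem_union, mem_sdiff]
  tauto

lemma exists_subset_inter_of_amle_join_xprod {κ₁ κ₂ : Fam}
    (hle : amle (joinAC κ₁ κ₂) (xprod κ₁ κ₂)) {A : Finset ℕ} (hA : A ∈ κ₁ ∪ κ₂) :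
    ∃ A' ∈ κ₁, ∃ B' ∈ κ₂, A ∩ (sp κ₁ ∩ sp κ₂) ⊆ A' ∩ B' := by
  have hle' := amle_trans (amle_maxels _) (amle_trans hle (amle_of_subset (maxels_subset _)))
  obtain ⟨X, hX, hAX⟩ := hle' A hA
  obtain ⟨⟨A', B'⟩, hA'B', rfl⟩ := mem_image.1 hX
  obtain ⟨hA', hB'⟩ := mem_product.1 hA'B'
  exact ⟨A', hA', B', hB',
    (inter_subset_inter_right hAX).trans (xprod_term_inter_span_subset κ₁ κ₂ A' B')⟩

theorem overlapping_span_empty_interval_general (S₁ S₂ : Finset ℕ)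
    (κ₁ κ₂ : Fam) (hs₁ : sp κ₁ = S₁)
    (hs₂ : sp κ₂ = S₂)
    (hneq : proj (S₁ ∩ S₂) κ₁ ≠ proj (S₁ ∩ S₂) κ₂) :
    ¬ amle (joinAC κ₁ κ₂) (xprod κ₁ κ₂) := by
  subst hs₁ hs₂
  intro hle
  exact hneq <| proj_eq_of_forall_subset_inter _ fun _ hA =>
    exists_subset_inter_of_amle_join_xprod hle hA

/-- interaction on overlapping spans makes the interval empty. -/
theorem overlapping_span_empty_interval (S₁ S₂ : Finset ℕ)
    (hinter : (S₁ ∩ S₂).Nonempty)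
    (κ₁ κ₂ : Fam) (h₁ : IsAC S₁ κ₁) (hs₁ : sp κ₁ = S₁)
    (h₂ : IsAC S₂ κ₂) (hs₂ : sp κ₂ = S₂)
    (hneq : proj (S₁ ∩ S₂) κ₁ ≠ proj (S₁ ∩ S₂) κ₂) :
    ¬ amle (joinAC κ₁ κ₂) (xprod κ₁ κ₂) :=
  overlapping_span_empty_interval_general S₁ S₂ κ₁ κ₂ hs₁ hs₂ hneq
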